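/- arXiv:1412.8293 — 3 statements merged into one kernel-verified Lean document; each statement's English description precedes it below -/
import Mathlib

section
/- Let p : ℝ → ℝ be a probability density with characteristic function φ. Then for any b > 0, ∫_ℝ ∫_ℝ (sin(b(x - y))/(x - y)) p(x) p(y) dx dy = (1/2) ∫_{-b}^{b} |φ(β)|^2 dβ. -/
open MeasureTheory Real

/-! The kernel is half the Fourier transform of the indicator of `[-b, b]`:
`sin (b t) / t = ½ ∫_{-b}^{b} cos (β t) dβ`. Inserting this and moving the `β`-integral outside
(Fubini, the integrand being dominated by `|p x| |p y|`), the addition formula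
`cos (β (x - y)) = cos (β x) cos (β y) + sin (β x) sin (β y)` factors the inner double integral
into `(∫ cos (β x) p x)² + (∫ sin (β x) p x)² = ‖φ β‖²`. -/

theorem sinc_eq_half_integral_cos (b x y : ℝ) :
    (if x = y then b else sin (b * (x - y)) / (x - y))
      = (1 / 2) * ∫ β in (-b)..b, cos (β * (x - y)) := by
  by_cases h : x = y
  · simp only [h, if_pos, sub_self, mul_zero, cos_zero, intervalIntegral.integral_const,
      sub_neg_eq_add, smul_eq_mul, mul_one]
    ring
  · have hxy : x - y ≠ 0 := sub_ne_zero.mpr h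
    rw [if_neg h, intervalIntegral.integral_comp_mul_right cos hxy, integral_cos, neg_mul,
      sin_neg, smul_eq_mul]
    field_simp
    ring

theorem MeasureTheory.Integrable.cos_mul {p : ℝ → ℝ} (hp : Integrable p) (β : ℝ) :
    Integrable fun x => cos (β * x) * p x :=
  hp.bdd_mul (by fun_prop) (c := 1) (.of_forall fun _ => abs_cos_le_one _)

theorem MeasureTheory.Integrable.sin_mul {p : ℝ → ℝ} (hp : Integrable p) (β : ℝ) :
    Integrable fun x => sin (β * x) * p x :=
  hp.bdd_mul (by fun_prop) (c := 1) (.of_forall fun _ => abs_sin_le_one _)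

theorem norm_integral_exp_mul_sq {p : ℝ → ℝ} (hp : Integrable p) (β : ℝ) :
    ‖∫ x : ℝ, Complex.exp (Complex.I * β * x) * (p x : ℂ)‖ ^ 2
      = (∫ x, cos (β * x) * p x) ^ 2 + (∫ x, sin (β * x) * p x) ^ 2 := by
  have hexp : ∀ x : ℝ,
      Complex.exp (Complex.I * β * x) = Complex.exp ((β * x : ℝ) * Complex.I) := by
    intro x
    push_cast
    ring_nf
  have hint : Integrable fun x : ℝ => Complex.exp (Complex.I * β * x) * (p x : ℂ) :=
    hp.ofReal.bdd_mul (c := 1) (by fun_prop)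
      (.of_forall fun x => by rw [hexp, Complex.norm_exp_ofReal_mul_I])
  rw [Complex.sq_norm, Complex.normSq_apply, ← RCLike.re_to_complex, ← RCLike.im_to_complex,
    ← integral_re hint, ← integral_im hint]
  simp only [hexp, RCLike.re_to_complex, RCLike.im_to_complex, Complex.re_mul_ofReal,
    Complex.im_mul_ofReal, Complex.exp_ofReal_mul_I_re, Complex.exp_ofReal_mul_I_im, sq]

theorem integral_integral_cos_mul_sub {p : ℝ → ℝ} (hp : Integrable p) (β : ℝ) :
    ∫ x, ∫ y, cos (β * (x - y)) * p x * p y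
      = (∫ x, cos (β * x) * p x) ^ 2 + (∫ x, sin (β * x) * p x) ^ 2 := by
  have hsplit : ∀ x y, cos (β * (x - y)) * p x * p y
      = (cos (β * x) * p x) * (cos (β * y) * p y)
        + (sin (β * x) * p x) * (sin (β * y) * p y) := by
    intro x y
    rw [mul_sub, cos_sub]
    ring
  simp only [hsplit, integral_add ((hp.cos_mul β).const_mul _) ((hp.sin_mul β).const_mul _),
    integral_const_mul]
  rw [integral_add ((hp.cos_mul β).mul_const _) ((hp.sin_mul β).mul_const _), integral_mul_const,
    integral_mul_const]
  ring

theorem integral_integral_integral_swap_of_abs_le {ν : Measure ℝ} [IsFiniteMeasure ν]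
    {p q : ℝ → ℝ} (hp : Integrable p) (hq : Integrable q) {k : ℝ → ℝ → ℝ → ℝ}
    (hk : Continuous fun w : ℝ × ℝ × ℝ => k w.1 w.2.1 w.2.2) {C : ℝ}
    (hC : ∀ x y β, |k x y β| ≤ C) :
    ∫ x, ∫ y, ∫ β, k x y β * p x * q y ∂ν = ∫ β, (∫ x, ∫ y, k x y β * p x * q y) ∂ν := by
  have hyβ : ∀ x, ∫ y, ∫ β, k x y β * p x * q y ∂ν = ∫ β, (∫ y, k x y β * p x * q y) ∂ν := by
    intro x
    refine integral_integral_swap (Integrable.mono'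
      ((hq.abs.mul_prod (integrable_const (1 : ℝ) (μ := ν))).const_mul (C * |p x|)) ?_ ?_)
    · exact ((hk.comp (f := fun z : ℝ × ℝ => (x, z.1, z.2)) (by fun_prop)).aestronglyMeasurable
        |>.mul_const _).mul hq.1.comp_fst
    · refine .of_forall fun z => ?_
      simp only [Function.uncurry, norm_mul, norm_eq_abs]
      exact (mul_le_mul_of_nonneg_right (mul_le_mul_of_nonneg_right (hC x z.1 z.2) (abs_nonneg _))
        (abs_nonneg _)).trans_eq (by ring)
  simp only [hyβ]
  have hint : Integrable (fun z : (ℝ × ℝ) × ℝ => k z.1.1 z.2 z.1.2 * p z.1.1 * q z.2)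
      ((volume.prod ν).prod volume) := by
    refine Integrable.mono' (((hp.abs.mul_prod (integrable_const (1 : ℝ) (μ := ν))).mul_prod
      hq.abs).const_mul C) ?_ (.of_forall fun z => ?_)
    · exact ((hk.comp (f := fun z : (ℝ × ℝ) × ℝ => (z.1.1, z.2, z.1.2)) (by fun_prop))
        |>.aestronglyMeasurable.mul hp.1.comp_fst.comp_fst).mul hq.1.comp_snd
    · simp only [norm_mul, norm_eq_abs]
      exact (mul_le_mul_of_nonneg_right (mul_le_mul_of_nonneg_right (hC _ _ _) (abs_nonneg _))
        (abs_nonneg _)).trans_eq (by ring)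
  exact integral_integral_swap hint.integral_prod_left

theorem stmt_3_general (p : ℝ → ℝ) (hpi : Integrable p)
    (φ : ℝ → ℂ) (hφ : ∀ β : ℝ, φ β = ∫ x : ℝ, Complex.exp (Complex.I * β * x) * (p x : ℂ))
    (b : ℝ) (hb : 0 < b) :
    (∫ x : ℝ, ∫ y : ℝ,
        (if x = y then b else Real.sin (b * (x - y)) / (x - y)) * p x * p y)
      = (1 / 2) * ∫ β in (-b)..b, ‖φ β‖^2 := by
  have hb' : -b ≤ b := neg_le_self hb.le
  have hkernel : ∀ x y, (if x = y then b else sin (b * (x - y)) / (x - y)) * p x * p y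
      = (1 / 2) * ∫ β in Set.Ioc (-b) b, cos (β * (x - y)) * p x * p y := by
    intro x y
    rw [sinc_eq_half_integral_cos, intervalIntegral.integral_of_le hb', integral_mul_const,
      integral_mul_const, mul_assoc, mul_assoc, mul_assoc]
  simp only [hkernel, integral_const_mul, hφ, intervalIntegral.integral_of_le hb',
    norm_integral_exp_mul_sq hpi, ← integral_integral_cos_mul_sub hpi]
  rw [integral_integral_integral_swap_of_abs_le (k := fun x y β => cos (β * (x - y))) hpi hpi
    (by fun_prop) fun _ _ _ => abs_cos_le_one _]

theorem stmt_3 (p : ℝ → ℝ) (hp0 : ∀ x, 0 ≤ p x) (hpi : Integrable p)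
    (hp1 : ∫ x, p x = 1)
    (φ : ℝ → ℂ) (hφ : ∀ β : ℝ, φ β = ∫ x : ℝ, Complex.exp (Complex.I * β * x) * (p x : ℂ))
    (b : ℝ) (hb : 0 < b) :
    (∫ x : ℝ, ∫ y : ℝ,
        (if x = y then b else Real.sin (b * (x - y)) / (x - y)) * p x * p y)
      = (1 / 2) * ∫ β in (-b)..b, ‖φ β‖^2 :=
  stmt_3_general p hpi φ hφ b hb
end

section
/- For the one-dimensional Gaussian density with mean 0 and variance σ^{-2} (characteristic function φ(β) = e^{-β²/(2σ²)}), for every b > 0 and real w: ∫_{-b}^{b} φ(β) e^{iwβ} dβ = √(2π) σ e^{-σ²w²/2} · Re(erf(b/(√2 σ) − i σw/√2)). -/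
/-!
Completing the square and substituting `β = √2 σ x` turn the integral into
`√2 σ e^{-σ²w²/2} ∫_{-B}^{B} e^{-(x - iy)²} dx` with `B = b/(√2σ)`, `y = σw/√2`.
Differentiating under the integral sign shows `cerf' z = (2/√π) e^{-z²}`, so by the fundamental
theorem of calculus along the horizontal segment the last integral is
`(√π/2) (cerf (B - iy) - cerf (-B - iy))`; since `-B - iy = -conj (B - iy)` and
`cerf (-conj z) = -conj (cerf z)`, this difference is `2 Re (cerf (B - iy))`.
-/

open MeasureTheory Real

/-- The entire complex error function `erf z = (2/√π) ∫_0^z e^{-t²} dt`,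
parametrized along the straight path from `0` to `z`. -/
noncomputable def cerf (z : ℂ) : ℂ :=
  (2 / Real.sqrt π : ℝ) * z * ∫ t in (0:ℝ)..1, Complex.exp (-((t : ℂ) * z)^2)

open scoped Complex ComplexConjugate

lemma hasDerivAt_mul_cexp_neg_sq (c u : ℂ) :
    HasDerivAt (fun u => u * cexp (-(c * u) ^ 2))
      ((1 - 2 * c ^ 2 * u ^ 2) * cexp (-(c * u) ^ 2)) u := by
  have hsq : HasDerivAt (fun u => -(c * u) ^ 2) (-(2 * c ^ 2 * u)) u :=
    ((hasDerivAt_const_mul c).fun_pow 2).fun_neg.congr_deriv (by push_cast; ring)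
  exact ((hasDerivAt_id' u).fun_mul hsq.cexp).congr_deriv (by ring)

lemma integral_deriv_mul_cexp_neg_sq (z : ℂ) :
    ∫ t in (0:ℝ)..1, (1 - 2 * (t : ℂ) ^ 2 * z ^ 2) * cexp (-((t : ℂ) * z) ^ 2)
      = cexp (-z ^ 2) := by
  have hderiv (t : ℝ) : HasDerivAt (fun t : ℝ => (t : ℂ) * cexp (-((t : ℂ) * z) ^ 2))
      ((1 - 2 * (t : ℂ) ^ 2 * z ^ 2) * cexp (-((t : ℂ) * z) ^ 2)) t := by
    have h := (hasDerivAt_mul_cexp_neg_sq z t).comp_ofReal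
    simp only [mul_comm z] at h
    exact h.congr_deriv (by ring)
  rw [intervalIntegral.integral_eq_sub_of_hasDerivAt (fun t _ => hderiv t)
    (Continuous.intervalIntegrable (by fun_prop) _ _)]
  simp

theorem hasDerivAt_cerf (z : ℂ) : HasDerivAt cerf ((2 / √π : ℝ) * cexp (-z ^ 2)) z := by
  set F : ℂ → ℝ → ℂ := fun z t => z * cexp (-((t : ℂ) * z) ^ 2)
  set F' : ℂ → ℝ → ℂ := fun z t =>
    (1 - 2 * (t : ℂ) ^ 2 * z ^ 2) * cexp (-((t : ℂ) * z) ^ 2)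
  have hF : ∀ z, Continuous (F z) := fun z => by fun_prop
  obtain ⟨C, hC⟩ := ((isCompact_closedBall z 1).prod isCompact_Icc).exists_bound_of_continuousOn
    (f := Function.uncurry F') (show Continuous (Function.uncurry F') by fun_prop).continuousOn
  have hbound :
      ∀ᵐ t ∂volume, t ∈ Set.uIoc (0:ℝ) 1 → ∀ x ∈ Metric.ball z 1, ‖F' x t‖ ≤ C := by
    refine Filter.Eventually.of_forall fun t ht x hx =>
      hC (x, t) ⟨Metric.ball_subset_closedBall hx, ?_⟩
    rw [Set.uIoc_of_le zero_le_one] at ht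
    exact Set.Ioc_subset_Icc_self ht
  have hderiv := (intervalIntegral.hasDerivAt_integral_of_dominated_loc_of_deriv_le
    (Metric.ball_mem_nhds z one_pos)
    (Filter.Eventually.of_forall fun x => (hF x).aestronglyMeasurable)
    ((hF z).intervalIntegrable 0 1) (by fun_prop : Continuous (F' z)).aestronglyMeasurable
    hbound intervalIntegrable_const
    (Filter.Eventually.of_forall fun t _ x _ => hasDerivAt_mul_cexp_neg_sq (t : ℂ) x)).2
  have hcerf : cerf = fun z => (2 / √π : ℝ) * ∫ t in (0:ℝ)..1, F z t := by
    funext z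
    simp only [cerf, F, intervalIntegral.integral_const_mul, mul_assoc]
  rw [hcerf, ← integral_deriv_mul_cexp_neg_sq z]
  exact hderiv.const_mul _

theorem integral_cexp_neg_sq_sub (a b : ℝ) (c : ℂ) :
    ∫ x in a..b, cexp (-((x : ℂ) - c) ^ 2)
      = (√π / 2 : ℝ) * (cerf (b - c) - cerf (a - c)) := by
  have hderiv (x : ℝ) : HasDerivAt (fun x : ℝ => cerf (x - c))
      ((2 / √π : ℝ) * cexp (-((x : ℂ) - c) ^ 2)) x :=
    ((hasDerivAt_cerf _).comp (x : ℂ) ((hasDerivAt_id' _).sub_const c)).comp_ofReal.congr_deriv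
      (mul_one _)
  have hftc := intervalIntegral.integral_eq_sub_of_hasDerivAt (fun x _ => hderiv x)
    (Continuous.intervalIntegrable (by fun_prop) a b)
  rw [intervalIntegral.integral_const_mul] at hftc
  have hsqrtπ : √π ≠ 0 := (Real.sqrt_pos.2 pi_pos).ne'
  rw [← hftc, ← mul_assoc, ← Complex.ofReal_mul, show √π / 2 * (2 / √π) = 1 by field_simp,
    Complex.ofReal_one, one_mul]

lemma cerf_neg (z : ℂ) : cerf (-z) = -cerf z := by
  simp [cerf]

lemma cerf_conj (z : ℂ) : cerf (conj z) = conj (cerf z) := by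
  have hconj (t : ℝ) : cexp (-((t : ℂ) * conj z) ^ 2) = conj (cexp (-((t : ℂ) * z) ^ 2)) := by
    simp [← Complex.exp_conj]
  simp only [cerf, hconj, intervalIntegral, ← integral_conj, map_sub, map_mul,
    Complex.conj_ofReal]

lemma cerf_sub_cerf_neg_conj (z : ℂ) : cerf z - cerf (-conj z) = 2 * (cerf z).re := by
  rw [cerf_neg, cerf_conj, sub_neg_eq_add, Complex.add_conj]
  push_cast
  ring

theorem integral_cexp_neg_sq_sub_I_mul (B y : ℝ) :
    ∫ x in (-B)..B, cexp (-((x : ℂ) - Complex.I * y) ^ 2)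
      = √π * (cerf (B - Complex.I * y)).re := by
  have hsymm : ((-B : ℝ) : ℂ) - Complex.I * y = -conj ((B : ℂ) - Complex.I * y) := by
    simp only [map_sub, map_mul, Complex.conj_I, Complex.conj_ofReal, Complex.ofReal_neg]
    ring
  rw [integral_cexp_neg_sq_sub, hsymm, cerf_sub_cerf_neg_conj]
  push_cast
  ring

lemma gaussian_mul_cexp_eq_mul_cexp_neg_sq (σ w β : ℝ) (hσ : σ ≠ 0) :
    (Real.exp (-β ^ 2 / (2 * σ ^ 2)) : ℂ) * cexp (Complex.I * w * β)
      = Real.exp (-σ ^ 2 * w ^ 2 / 2)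
        * cexp (-(((β / (√2 * σ) : ℝ) : ℂ) - Complex.I * ((σ * w / √2 : ℝ) : ℂ)) ^ 2) := by
  have hsqrt2 : ((√2 : ℝ) : ℂ) ^ 2 = 2 := by norm_cast; exact Real.sq_sqrt zero_le_two
  have hσ' : (σ : ℂ) ≠ 0 := by exact_mod_cast hσ
  have hsqrt2' : ((√2 : ℝ) : ℂ) ≠ 0 := by exact_mod_cast (by positivity : √2 ≠ 0)
  rw [Complex.ofReal_exp, Complex.ofReal_exp, ← Complex.exp_add, ← Complex.exp_add]
  congr 1
  push_cast
  field_simp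
  ring_nf
  simp only [hsqrt2, Complex.I_sq]
  ring

theorem stmt_11_general (σ b w : ℝ) (hσ : 0 < σ) :
    ∫ β in (-b)..b, (Real.exp (-β^2 / (2 * σ^2)) : ℂ) * Complex.exp (Complex.I * w * β)
      = ((Real.sqrt (2 * π) * σ * Real.exp (-σ^2 * w^2 / 2) : ℝ) : ℂ)
        * ((cerf (((b / (Real.sqrt 2 * σ) : ℝ) : ℂ)
            - Complex.I * ((σ * w / Real.sqrt 2 : ℝ) : ℂ))).re : ℂ) := by
  simp_rw [gaussian_mul_cexp_eq_mul_cexp_neg_sq σ w _ hσ.ne']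
  rw [intervalIntegral.integral_const_mul,
    intervalIntegral.integral_comp_div
      (fun x : ℝ => cexp (-((x : ℂ) - Complex.I * ((σ * w / √2 : ℝ) : ℂ)) ^ 2)) (by positivity),
    neg_div, integral_cexp_neg_sq_sub_I_mul, Real.sqrt_mul zero_le_two]
  push_cast [Complex.real_smul]
  ring

theorem stmt_11 (σ b w : ℝ) (hσ : 0 < σ) (hb : 0 < b) :
    ∫ β in (-b)..b, (Real.exp (-β^2 / (2 * σ^2)) : ℂ) * Complex.exp (Complex.I * w * β)
      = ((Real.sqrt (2 * π) * σ * Real.exp (-σ^2 * w^2 / 2) : ℝ) : ℂ)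
        * ((cerf (((b / (Real.sqrt 2 * σ) : ℝ) : ℂ)
            - Complex.I * ((σ * w / Real.sqrt 2 : ℝ) : ℂ))).re : ℂ) :=
  stmt_11_general σ b w hσ
end

section
/- Under the setting of the previous statement, the average of the squared integration error over u drawn uniformly from the box {u : |u_j| ≤ b_j ∀j} satisfies E_u[ε(u)²] = (π^d / ∏_{j=1}^d b_j) · D²(S), where D(S) = ‖μ − (1/s)∑_l sinc_b(w_l, ·)‖_{PW_b} is the box discrepancy and μ(y) = ∫ sinc_b(y,x) p(x) dx is the kernel mean embedding of p into the Paley–Wiener space PW_b. -/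
/-!
Both sides are quadratic forms in the signed measure `ν = p dx - (1/s) ∑ₗ δ_{wₗ}`. The error at
frequency `u` is `ε u = |∫ e^{-i⟨u,x⟩} dν(x)|`, so by Fubini
`∫_box ε² = ∬ (∫_box e^{-i⟨u,x-y⟩} du) dν(x) dν(y)`, and the inner integral factors over the
coordinates into `∏ⱼ 2 sin (bⱼ (xⱼ - yⱼ)) / (xⱼ - yⱼ) = (2π)^d sinc_b(x, y)`. On the kernel side,
the defining property of the mean embedding gives
`‖μ - (1/s) ∑ₗ k wₗ‖² = ∬ sinc_b(x, y) dν(x) dν(y)`.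
-/

open MeasureTheory Real Set
open scoped ComplexConjugate RealInnerProductSpace

section QuadratureError

variable {X : Type*} [MeasurableSpace X] {ι : Type*} [Fintype ι]
  {𝕜 : Type*} [RCLike 𝕜] {m : Measure X} {p : X → ℝ} {a : ι → ℝ} {w : ι → X}

variable (𝕜 m p a w) in
/-- `φ ↦ ∫ φ dν` for the signed measure `ν = p • m - ∑ₗ a l • δ_{w l}`. -/
noncomputable def quadratureError (φ : X → 𝕜) : 𝕜 :=
  ∫ x, φ x * p x ∂m - ∑ l, (a l : 𝕜) * φ (w l)

theorem quadratureError_mul_const (φ : X → 𝕜) (c : 𝕜) :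
    quadratureError 𝕜 m p a w (fun x => φ x * c) = quadratureError 𝕜 m p a w φ * c := by
  simp only [quadratureError, sub_mul, Finset.sum_mul, ← integral_mul_const, mul_right_comm _ c,
    mul_assoc]

theorem quadratureError_conj (φ : X → 𝕜) :
    quadratureError 𝕜 m p a w (fun x => conj (φ x)) = conj (quadratureError 𝕜 m p a w φ) := by
  simp [quadratureError, ← integral_conj]

theorem quadratureError_ofReal (φ : X → ℝ) :
    quadratureError 𝕜 m p a w (fun x => (φ x : 𝕜)) = (quadratureError ℝ m p a w φ : 𝕜) := by
  simp [quadratureError, ← integral_ofReal]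

theorem norm_quadratureError_le (hp : Integrable p m) {φ : X → 𝕜} {C : ℝ}
    (hφ : ∀ x, ‖φ x‖ ≤ C) :
    ‖quadratureError 𝕜 m p a w φ‖ ≤ C * ((∫ x, |p x| ∂m) + ∑ l, |a l|) := by
  have hint : ‖∫ x, φ x * p x ∂m‖ ≤ C * ∫ x, |p x| ∂m := by
    rw [← integral_const_mul]
    refine norm_integral_le_of_norm_le (hp.abs.const_mul C) (ae_of_all _ fun x => ?_)
    rw [norm_mul, RCLike.norm_ofReal]
    exact mul_le_mul_of_nonneg_right (hφ x) (abs_nonneg _)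
  have hsum : ‖∑ l, (a l : 𝕜) * φ (w l)‖ ≤ C * ∑ l, |a l| := by
    rw [Finset.mul_sum]
    refine (norm_sum_le _ _).trans (Finset.sum_le_sum fun l _ => ?_)
    rw [norm_mul, RCLike.norm_ofReal, mul_comm]
    exact mul_le_mul_of_nonneg_right (hφ _) (abs_nonneg _)
  rw [mul_add]
  exact (norm_sub_le _ _).trans (add_le_add hint hsum)

section Topological

variable [TopologicalSpace X] [OpensMeasurableSpace X] {Y : Type*} [TopologicalSpace Y]

local notation "𝓠" => quadratureError 𝕜 m p a w

theorem continuous_quadratureError [FirstCountableTopology Y] (hp : Integrable p m)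
    {g : Y → X → 𝕜} (hg : Continuous (Function.uncurry g)) {C : ℝ} (hC : ∀ u x, ‖g u x‖ ≤ C) :
    Continuous fun u => 𝓠 (g u) := by
  have hg₂ : ∀ u, Continuous (g u) := fun u => hg.comp (continuous_const.prodMk continuous_id)
  have hg₁ : ∀ x, Continuous (g · x) := fun x => hg.comp (continuous_id.prodMk continuous_const)
  refine Continuous.sub ?_ (continuous_finsetSum _ fun l _ => continuous_const.mul (hg₁ _))
  refine continuous_of_dominated (bound := fun x => C * |p x|)
    (fun u => (hg₂ u).aestronglyMeasurable.mul hp.ofReal.aestronglyMeasurable)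
    (fun u => ae_of_all _ fun x => ?_) (hp.abs.const_mul C)
    (ae_of_all _ fun x => (hg₁ x).mul continuous_const)
  rw [norm_mul, RCLike.norm_ofReal]
  exact mul_le_mul_of_nonneg_right (hC u x) (abs_nonneg _)

theorem integral_quadratureError_comm [SecondCountableTopology X] [MeasurableSpace Y]
    [OpensMeasurableSpace Y] [SFinite m] {ν : Measure Y} [IsFiniteMeasure ν]
    (hp : Integrable p m) {g : Y → X → 𝕜}
    (hg : Continuous (Function.uncurry g)) {C : ℝ} (hC : ∀ u x, ‖g u x‖ ≤ C) :
    ∫ u, 𝓠 (g u) ∂ν = 𝓠 (fun x => ∫ u, g u x ∂ν) := by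
  have hint : Integrable (Function.uncurry fun u x => g u x * p x) (ν.prod m) := by
    refine ((integrable_const C).mul_prod hp.abs).mono'
      (hg.aestronglyMeasurable.mul hp.ofReal.aestronglyMeasurable.comp_snd)
      (ae_of_all _ fun z => ?_)
    simp only [Function.uncurry, norm_mul, RCLike.norm_ofReal]
    exact mul_le_mul_of_nonneg_right (hC z.1 z.2) (abs_nonneg _)
  have hatom : ∀ l, Integrable (fun u => (a l : 𝕜) * g u (w l)) ν := fun l =>
    (Integrable.of_bound (hg.comp (continuous_id.prodMk continuous_const)).aestronglyMeasurable
      C (ae_of_all _ fun u => hC u (w l))).const_mul _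
  have hdens : Integrable (fun u => ∫ x, g u x * p x ∂m) ν := hint.integral_prod_left
  simp only [quadratureError]
  rw [integral_sub hdens (integrable_finsetSum _ fun l _ => hatom l),
    integral_integral_swap hint, integral_finsetSum _ fun l _ => hatom l]
  simp_rw [integral_mul_const, integral_const_mul]

theorem integral_norm_sq_quadratureError [SecondCountableTopology X] [FirstCountableTopology Y]
    [MeasurableSpace Y] [OpensMeasurableSpace Y] [SFinite m] {ν : Measure Y} [IsFiniteMeasure ν]
    (hp : Integrable p m) {e : Y → X → 𝕜} (he : Continuous (Function.uncurry e)) {C : ℝ}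
    (hC : ∀ u x, ‖e u x‖ ≤ C) :
    ((∫ u, ‖𝓠 (e u)‖ ^ 2 ∂ν : ℝ) : 𝕜) = 𝓠 fun x => 𝓠 fun y => ∫ u, e u x * conj (e u y) ∂ν := by
  have hF : Continuous fun u => 𝓠 (e u) := continuous_quadratureError hp he hC
  obtain ⟨B, hFB⟩ : ∃ B, ∀ u, ‖𝓠 (e u)‖ ≤ B := ⟨_, fun u => norm_quadratureError_le hp (hC u)⟩
  have he₁ : ∀ x, Continuous (e · x) := fun x => he.comp (continuous_id.prodMk continuous_const)
  calc ((∫ u, ‖𝓠 (e u)‖ ^ 2 ∂ν : ℝ) : 𝕜)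
      = ∫ u, 𝓠 (fun x => e u x * conj (𝓠 (e u))) ∂ν := by
        simp_rw [quadratureError_mul_const, RCLike.mul_conj, ← integral_ofReal, RCLike.ofReal_pow]
    _ = 𝓠 (fun x => ∫ u, e u x * conj (𝓠 (e u)) ∂ν) := by
        refine integral_quadratureError_comm (C := C * B) hp
          (he.mul (RCLike.continuous_conj.comp (hF.comp continuous_fst))) (fun u x => ?_)
        rw [norm_mul, RCLike.norm_conj]
        exact mul_le_mul (hC u x) (hFB u) (norm_nonneg _) ((norm_nonneg _).trans (hC u x))
    _ = 𝓠 (fun x => conj (∫ u, 𝓠 (fun y => e u y * conj (e u x)) ∂ν)) := by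
        simp_rw [quadratureError_mul_const, ← integral_conj, map_mul, RCLike.conj_conj, mul_comm]
    _ = 𝓠 (fun x => conj (𝓠 (fun y => ∫ u, e u y * conj (e u x) ∂ν))) := by
        congr 1; funext x; congr 1
        refine integral_quadratureError_comm (C := C * C) hp
          (he.mul (RCLike.continuous_conj.comp ((he₁ x).comp continuous_fst))) (fun u y => ?_)
        rw [norm_mul, RCLike.norm_conj]
        exact mul_le_mul (hC u y) (hC u x) (norm_nonneg _) ((norm_nonneg _).trans (hC u y))
    _ = _ := by
        simp_rw [← quadratureError_conj, ← integral_conj, map_mul, RCLike.conj_conj, mul_comm]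

end Topological

section Kernel

variable {H : Type*} [NormedAddCommGroup H] [InnerProductSpace ℝ H] {k : X → H} {μ : H}

theorem inner_sub_sum_smul_eq_quadratureError (hμ : ∀ f : H, ∫ x, ⟪f, k x⟫ * p x ∂m = ⟪f, μ⟫)
    (f : H) :
    ⟪f, μ - ∑ l, a l • k (w l)⟫ = quadratureError ℝ m p a w fun x => ⟪f, k x⟫ := by
  simp only [quadratureError, inner_sub_right, inner_sum, real_inner_smul_right, ← hμ,
    RCLike.ofReal_real_eq_id, id]

theorem norm_sub_sum_smul_sq_eq_quadratureError
    (hμ : ∀ f : H, ∫ x, ⟪f, k x⟫ * p x ∂m = ⟪f, μ⟫) :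
    ‖μ - ∑ l, a l • k (w l)‖ ^ 2
      = quadratureError ℝ m p a w fun x => quadratureError ℝ m p a w fun y => ⟪k x, k y⟫ := by
  rw [← real_inner_self_eq_norm_sq, inner_sub_sum_smul_eq_quadratureError hμ]
  congr 1 with x
  rw [real_inner_comm, inner_sub_sum_smul_eq_quadratureError hμ]

end Kernel

end QuadratureError

section Fourier

variable {κ : Type*} [Fintype κ]

noncomputable def fourierKernel (u x : κ → ℝ) : ℂ :=
  Complex.exp (-(Complex.I * ↑(∑ j, u j * x j)))

theorem norm_fourierKernel (u x : κ → ℝ) : ‖fourierKernel u x‖ = 1 := by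
  simp [fourierKernel, Complex.norm_exp]

theorem continuous_fourierKernel : Continuous (Function.uncurry (fourierKernel (κ := κ))) := by
  unfold fourierKernel Function.uncurry
  fun_prop

theorem fourierKernel_mul_conj (u x y : κ → ℝ) :
    fourierKernel u x * conj (fourierKernel u y)
      = ∏ j, Complex.exp (-(Complex.I * ↑(u j * (x j - y j)))) := by
  rw [fourierKernel, fourierKernel, ← Complex.exp_conj, ← Complex.exp_add, ← Complex.exp_sum]
  congr 1
  simp only [map_neg, map_mul, map_sum, Complex.conj_I, Complex.conj_ofReal, mul_sub,
    Finset.sum_sub_distrib, Complex.ofReal_sub, ← Finset.mul_sum, Complex.ofReal_sum,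
    Finset.sum_neg_distrib]
  ring

theorem mul_sinc_mul {t : ℝ} (a : ℝ) (ht : t ≠ 0) : a * sinc (a * t) = sin (a * t) / t := by
  rcases eq_or_ne a 0 with rfl | ha
  · simp
  · rw [sinc_of_ne_zero (mul_ne_zero ha ht)]
    field_simp

theorem prod_ite_sin_div_eq_prod_mul_sinc (b x y : κ → ℝ) :
    ∏ j, (if x j = y j then b j else sin (b j * (x j - y j)) / (x j - y j))
      = ∏ j, b j * sinc (b j * (x j - y j)) := by
  refine Finset.prod_congr rfl fun j _ => ?_
  split_ifs with hxy
  · simp [hxy]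
  · exact (mul_sinc_mul _ (sub_ne_zero.mpr hxy)).symm

theorem integral_Icc_cexp_neg_mul {a : ℝ} (ha : 0 ≤ a) (t : ℝ) :
    ∫ u in Icc (-a) a, Complex.exp (-(Complex.I * ↑(u * t))) = ↑(2 * a * sinc (a * t)) := by
  rw [integral_Icc_eq_integral_Ioc, ← intervalIntegral.integral_of_le (by linarith)]
  rcases eq_or_ne t 0 with rfl | ht
  · simp [two_mul]
  have hc : -(Complex.I * t) ≠ 0 := by simp [ht]
  simp_rw [show ∀ u : ℝ, -(Complex.I * ↑(u * t)) = -(Complex.I * t) * u by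
    intro u; push_cast; ring]
  rw [integral_exp_mul_complex hc, mul_assoc, mul_sinc_mul a ht]
  push_cast
  rw [Complex.sin]
  field_simp
  ring_nf
  rw [Complex.I_sq]
  ring

theorem integral_box_fourierKernel_mul_conj {b : κ → ℝ} (hb : ∀ j, 0 ≤ b j) (x y : κ → ℝ) :
    ∫ u in univ.pi fun j => Icc (-b j) (b j), fourierKernel u x * conj (fourierKernel u y)
      = ↑(∏ j, 2 * b j * sinc (b j * (x j - y j))) := by
  simp_rw [fourierKernel_mul_conj, volume_pi, Measure.restrict_pi_pi]
  rw [integral_fintype_prod_eq_prod fun j v => Complex.exp (-(Complex.I * ↑(v * (x j - y j))))]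
  simp_rw [integral_Icc_cexp_neg_mul (hb _), Complex.ofReal_prod]

end Fourier

theorem stmt_18_general {d s : ℕ} (b : Fin d → ℝ) (hb : ∀ j, 0 < b j)
    (p : (Fin d → ℝ) → ℝ) (hpi : Integrable p)
    (w : Fin s → (Fin d → ℝ))
    (sincb : (Fin d → ℝ) → (Fin d → ℝ) → ℝ)
    (hsinc : ∀ v v' : Fin d → ℝ, sincb v v'
      = ((π : ℝ)^d)⁻¹ * ∏ j, (if v j = v' j then b j
          else Real.sin (b j * (v j - v' j)) / (v j - v' j)))
    -- the Paley–Wiener RKHS, presented through its feature map `k`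
    {H : Type*} [NormedAddCommGroup H] [InnerProductSpace ℝ H]
    (k : (Fin d → ℝ) → H) (hker : ∀ x y, ⟪k x, k y⟫ = sincb x y)
    -- the kernel mean embedding of `p`
    (μ : H) (hμ : ∀ f : H, ∫ x, ⟪f, k x⟫ * p x = ⟪f, μ⟫)
    -- the integration error over frequencies
    (ε : (Fin d → ℝ) → ℝ)
    (hε : ∀ u : Fin d → ℝ, ε u = norm
      ((∫ x : Fin d → ℝ, Complex.exp (-(Complex.I * (∑ j, u j * x j))) * (p x : ℂ))
        - ((s : ℝ) : ℂ)⁻¹ * ∑ l, Complex.exp (-(Complex.I * (∑ j, u j * w l j))))) :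
    (∏ j, (2 * b j))⁻¹ *
        ∫ u in Set.pi Set.univ (fun j : Fin d => Set.Icc (-(b j)) (b j)), (ε u)^2
      = (π^d / ∏ j, b j) * ‖μ - (s : ℝ)⁻¹ • ∑ l, k (w l)‖^2 := by
  have hεQ : ∀ u, ε u
      = ‖quadratureError ℂ volume p (fun _ => (s : ℝ)⁻¹) w (fourierKernel u)‖ := by
    intro u
    simp [hε, quadratureError, fourierKernel, Finset.mul_sum]
  have hsinc_fourier : ∀ x y,
      ∏ j, 2 * b j * sinc (b j * (x j - y j)) = ⟪k x, k y⟫ * (2 * π) ^ d := by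
    intro x y
    rw [hker, hsinc, prod_ite_sin_div_eq_prod_mul_sinc]
    simp only [mul_assoc (2 : ℝ), Finset.prod_mul_distrib, Fin.prod_const]
    field_simp
    ring
  have : IsFiniteMeasure (volume.restrict (univ.pi fun j : Fin d => Icc (-b j) (b j))) :=
    isFiniteMeasure_restrict.mpr (isCompact_univ_pi fun _ => isCompact_Icc).measure_lt_top.ne
  have hFourier : ∫ u in univ.pi fun j => Icc (-b j) (b j), ε u ^ 2
      = (quadratureError ℝ volume p (fun _ => (s : ℝ)⁻¹) w fun x =>
          quadratureError ℝ volume p (fun _ => (s : ℝ)⁻¹) w fun y => ⟪k x, k y⟫) * (2 * π) ^ d := by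
    apply RCLike.ofReal_injective (K := ℂ)
    simp_rw [hεQ, integral_norm_sq_quadratureError hpi continuous_fourierKernel
      (fun u x => (norm_fourierKernel u x).le),
      integral_box_fourierKernel_mul_conj (fun j => (hb j).le), hsinc_fourier,
      ← RCLike.ofReal_eq_complex_ofReal, quadratureError_ofReal, quadratureError_mul_const]
  rw [hFourier, Finset.smul_sum, ← norm_sub_sum_smul_sq_eq_quadratureError hμ]
  rw [Finset.prod_mul_distrib, Fin.prod_const, mul_pow]
  have := Finset.prod_ne_zero_iff.mpr fun j (_ : j ∈ Finset.univ) => (hb j).ne'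
  field_simp

theorem stmt_18 {d s : ℕ} (hs : 0 < s) (b : Fin d → ℝ) (hb : ∀ j, 0 < b j)
    (p : (Fin d → ℝ) → ℝ) (hp0 : ∀ x, 0 ≤ p x) (hpi : Integrable p)
    (hp1 : ∫ x, p x = 1)
    (w : Fin s → (Fin d → ℝ))
    (sincb : (Fin d → ℝ) → (Fin d → ℝ) → ℝ)
    (hsinc : ∀ v v' : Fin d → ℝ, sincb v v'
      = ((π : ℝ)^d)⁻¹ * ∏ j, (if v j = v' j then b j
          else Real.sin (b j * (v j - v' j)) / (v j - v' j)))
    -- the Paley–Wiener RKHS, presented through its feature map `k`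
    {H : Type*} [NormedAddCommGroup H] [InnerProductSpace ℝ H]
    (k : (Fin d → ℝ) → H) (hker : ∀ x y, ⟪k x, k y⟫ = sincb x y)
    -- the kernel mean embedding of `p`
    (μ : H) (hμ : ∀ f : H, ∫ x, ⟪f, k x⟫ * p x = ⟪f, μ⟫)
    -- the integration error over frequencies
    (ε : (Fin d → ℝ) → ℝ)
    (hε : ∀ u : Fin d → ℝ, ε u = norm
      ((∫ x : Fin d → ℝ, Complex.exp (-(Complex.I * (∑ j, u j * x j))) * (p x : ℂ))
        - ((s : ℝ) : ℂ)⁻¹ * ∑ l, Complex.exp (-(Complex.I * (∑ j, u j * w l j))))) :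
    (∏ j, (2 * b j))⁻¹ *
        ∫ u in Set.pi Set.univ (fun j : Fin d => Set.Icc (-(b j)) (b j)), (ε u)^2
      = (π^d / ∏ j, b j) * ‖μ - (s : ℝ)⁻¹ • ∑ l, k (w l)‖^2 :=
  stmt_18_general b hb p hpi w sincb hsinc k hker μ hμ ε hε
end
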